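/- arXiv:1907.02728 — 3 statements merged into one kernel-verified Lean document; each statement's English description precedes it below -/
import Mathlib

section
/- (Singleton bound for rank metric codes, Delsarte) Let m, n ≥ d ≥ 1 be positive integers and q a prime power. If C is a set of m×n matrices over F_q such that any two distinct elements U, W of C satisfy rank(U - W) ≥ d, then #C ≤ q^{max(n,m)·(min(n,m) - d + 1)}. -/
/-!
Puncturing: if every two distinct codewords differ in rank by more than `r`, then two codewords
that agree on all but `r` rows are equal, since their difference has at most `r` nonzero rows.
So keeping only `#rows - r` rows is injective on the code, which bounds `#C` by the number of
such row blocks. Transposing gives the same bound with the roles of rows and columns exchanged.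
-/

open Matrix Finset

theorem Matrix.rank_sub_le_card_compl_of_eqOn {R ι κ : Type*} [CommRing R] [StrongRankCondition R]
    [Fintype ι] [DecidableEq ι] [Fintype κ] {U W : Matrix ι κ R} {s : Finset ι}
    (h : ∀ i ∈ s, U i = W i) : (U - W).rank ≤ sᶜ.card := by
  refine rank_le_card_of_support_subset _ _ fun i hi => ?_
  by_contra his
  exact hi (sub_eq_zero.mpr (h i (by simpa using his)))

section RankDistance

variable {F ι κ : Type*} [Field F] [Fintype F] [Fintype ι] [Fintype κ]

theorem card_le_of_lt_rank_sub {r : ℕ} (C : Finset (Matrix ι κ F))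
    (hC : ∀ U ∈ C, ∀ W ∈ C, U ≠ W → r < (U - W).rank) :
    C.card ≤ Fintype.card F ^ (Fintype.card κ * (Fintype.card ι - r)) := by
  classical
  obtain ⟨s, -, hs⟩ := exists_subset_card_eq (s := (univ : Finset ι)) (n := Fintype.card ι - r)
    (by simp)
  have hinj : Set.InjOn (fun (M : Matrix ι κ F) (i : s) => M i) C := by
    intro U hU W hW hUW
    by_contra hne
    have hle := rank_sub_le_card_compl_of_eqOn fun i hi => congrFun hUW ⟨i, hi⟩
    rw [card_compl, hs] at hle
    have := hC U hU W hW hne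
    omega
  calc C.card ≤ Fintype.card (s → κ → F) :=
        card_le_card_of_injOn _ (fun _ _ => mem_coe.mpr (mem_univ _)) hinj
    _ = Fintype.card F ^ (Fintype.card κ * (Fintype.card ι - r)) := by
        simp [hs, ← pow_mul]

theorem card_le_pow_max_mul_min_sub {r : ℕ} (C : Finset (Matrix ι κ F))
    (hC : ∀ U ∈ C, ∀ W ∈ C, U ≠ W → r < (U - W).rank) :
    C.card ≤ Fintype.card F ^
      (max (Fintype.card κ) (Fintype.card ι) * (min (Fintype.card κ) (Fintype.card ι) - r)) := by
  classical
  have hCt : ∀ U ∈ C.image transpose, ∀ W ∈ C.image transpose, U ≠ W → r < (U - W).rank := by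
    simp only [mem_image]
    rintro _ ⟨U, hU, rfl⟩ _ ⟨W, hW, rfl⟩ hne
    rw [← transpose_sub, rank_transpose]
    exact hC U hU W hW fun h => hne (h ▸ rfl)
  rcases le_total (Fintype.card ι) (Fintype.card κ) with h | h
  · rw [max_eq_left h, min_eq_right h]
    exact card_le_of_lt_rank_sub C hC
  · rw [max_eq_right h, min_eq_left h, ← card_image_of_injective C transpose_injective]
    exact card_le_of_lt_rank_sub _ hCt

end RankDistance

theorem delsarte_singleton_bound_general {F : Type*} [Field F] [Fintype F] {q m n d : ℕ}
    (hq : Fintype.card F = q) (hd1 : 1 ≤ d)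
    (C : Finset (Matrix (Fin m) (Fin n) F))
    (hC : ∀ U ∈ C, ∀ W ∈ C, U ≠ W → d ≤ (U - W).rank) :
    C.card ≤ q ^ (max n m * (min n m - d + 1)) := by
  have hbound := card_le_pow_max_mul_min_sub (r := d - 1) C fun U hU W hW hne => by
    have := hC U hU W hW hne
    omega
  simp only [Fintype.card_fin, hq] at hbound
  refine hbound.trans (Nat.pow_le_pow_right ?_ (Nat.mul_le_mul_left _ (by omega)))
  exact hq ▸ Fintype.card_pos

/-- **Singleton bound for rank metric codes** (Delsarte). If `C` is a set of `m × n`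
matrices over `F_q` with minimum rank distance `d`, where `1 ≤ d ≤ m, n`, then
`#C ≤ q ^ (max n m * (min n m - d + 1))`. -/
theorem delsarte_singleton_bound {F : Type*} [Field F] [Fintype F] {q m n d : ℕ}
    (hq : Fintype.card F = q) (hd1 : 1 ≤ d) (hdm : d ≤ m) (hdn : d ≤ n)
    (C : Finset (Matrix (Fin m) (Fin n) F))
    (hC : ∀ U ∈ C, ∀ W ∈ C, U ≠ W → d ≤ (U - W).rank) :
    C.card ≤ q ^ (max n m * (min n m - d + 1)) :=
  delsarte_singleton_bound_general hq hd1 C hC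
end

section
/- Let A, B be m×n matrices over a field with rank(A - B) ≥ d, and let U_A, U_B ≤ F^{m+n} be the row spaces of the m×(m+n) matrices [I_m | A] and [I_m | B] respectively (I_m the m×m identity). Then dim(U_A ∩ U_B) ≤ m - d, i.e., the subspace distance satisfies d_s(U_A, U_B) ≥ 2d. -/
open Module

/-!
A vector of `U_A ⊓ U_B` is `x ⬝ [I | A] = y ⬝ [I | B]`; the identity block forces `x = y`,
and then `x ⬝ (A - B) = 0`. So `U_A ⊓ U_B` is the image of the left kernel of `A - B` under the
injective map `x ↦ x ⬝ [I | A]`, whence `dim (U_A ⊓ U_B) = m - rank (A - B)`, while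
`dim U_A = dim U_B = m`.
-/

namespace Matrix

variable {R K m n : Type*} [Fintype m]

section rank

variable [Field K] [Fintype n]

theorem finrank_range_vecMulLinear (A : Matrix m n K) :
    finrank K (LinearMap.range A.vecMulLinear) = A.rank := by
  rw [range_vecMulLinear, rank_eq_finrank_span_row]

theorem finrank_ker_vecMulLinear_add_rank (A : Matrix m n K) :
    finrank K (LinearMap.ker A.vecMulLinear) + A.rank = Fintype.card m := by
  rw [← finrank_range_vecMulLinear, add_comm, LinearMap.finrank_range_add_finrank_ker,
    finrank_fintype_fun_eq_card]

end rank

variable [DecidableEq m]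

theorem vecMul_fromCols_one [Semiring R] (A : Matrix m n R) (x : m → R) :
    x ᵥ* fromCols (1 : Matrix m m R) A = Sum.elim x (x ᵥ* A) := by
  rw [vecMul_fromCols, vecMul_one]

theorem vecMul_fromCols_one_injective [Semiring R] (A : Matrix m n R) :
    Function.Injective (fromCols (1 : Matrix m m R) A).vecMul := by
  intro x y h
  simp only [vecMul_fromCols_one, Sum.elim_eq_iff] at h
  exact h.1

theorem range_vecMulLinear_fromCols_one_inf [Ring R] (A B : Matrix m n R) :
    LinearMap.range (fromCols (1 : Matrix m m R) A).vecMulLinear ⊓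
        LinearMap.range (fromCols (1 : Matrix m m R) B).vecMulLinear =
      (LinearMap.ker (A - B).vecMulLinear).map (fromCols (1 : Matrix m m R) A).vecMulLinear := by
  ext v
  simp only [Submodule.mem_inf, LinearMap.mem_range, Submodule.mem_map, LinearMap.mem_ker,
    vecMulLinear_apply, vecMul_fromCols_one, vecMul_sub, sub_eq_zero]
  constructor
  · rintro ⟨⟨x, rfl⟩, y, hyx⟩
    obtain ⟨rfl, hBA⟩ := Sum.elim_eq_iff.mp hyx
    exact ⟨y, hBA.symm, rfl⟩
  · rintro ⟨x, hAB, rfl⟩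
    exact ⟨⟨x, rfl⟩, x, by rw [hAB]⟩

variable [Field K]

theorem finrank_range_vecMulLinear_fromCols_one (A : Matrix m n K) :
    finrank K (LinearMap.range (fromCols (1 : Matrix m m K) A).vecMulLinear) = Fintype.card m := by
  rw [LinearMap.finrank_range_of_inj (vecMul_fromCols_one_injective A),
    finrank_fintype_fun_eq_card]

theorem finrank_range_vecMulLinear_fromCols_one_inf_add_rank [Fintype n] (A B : Matrix m n K) :
    finrank K ↥(LinearMap.range (fromCols (1 : Matrix m m K) A).vecMulLinear ⊓
        LinearMap.range (fromCols (1 : Matrix m m K) B).vecMulLinear) + (A - B).rank =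
      Fintype.card m := by
  rw [range_vecMulLinear_fromCols_one_inf, ← finrank_ker_vecMulLinear_add_rank (A - B),
    ← (Submodule.equivMapOfInjective (fromCols (1 : Matrix m m K) A).vecMulLinear
      (vecMul_fromCols_one_injective A) _).finrank_eq]

end Matrix

/-- Lifting translates rank distance into subspace distance: if `rank (A - B) ≥ d` and
`U_A`, `U_B` are the row spaces of `[I | A]` and `[I | B]`, then
`dim (U_A ∩ U_B) ≤ m - d`, i.e. `d_s(U_A, U_B) ≥ 2d`. -/
theorem lifting_rank_to_subspace_distance {F : Type*} [Field F] {m n d : ℕ}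
    (A B : Matrix (Fin m) (Fin n) F) (hAB : d ≤ (A - B).rank) :
    (finrank F ↥(LinearMap.range (Matrix.fromCols (1 : Matrix (Fin m) (Fin m) F) A).vecMulLinear ⊓
        LinearMap.range (Matrix.fromCols (1 : Matrix (Fin m) (Fin m) F) B).vecMulLinear) : ℤ)
      ≤ (m : ℤ) - d ∧
    (2 * d : ℤ) ≤
      finrank F ↥(LinearMap.range (Matrix.fromCols (1 : Matrix (Fin m) (Fin m) F) A).vecMulLinear)
      + finrank F ↥(LinearMap.range (Matrix.fromCols (1 : Matrix (Fin m) (Fin m) F) B).vecMulLinear)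
      - 2 * finrank F ↥(LinearMap.range (Matrix.fromCols (1 : Matrix (Fin m) (Fin m) F) A).vecMulLinear ⊓
          LinearMap.range (Matrix.fromCols (1 : Matrix (Fin m) (Fin m) F) B).vecMulLinear) := by
  have hcap := Matrix.finrank_range_vecMulLinear_fromCols_one_inf_add_rank A B
  rw [Fintype.card_fin] at hcap
  rw [Matrix.finrank_range_vecMulLinear_fromCols_one,
    Matrix.finrank_range_vecMulLinear_fromCols_one, Fintype.card_fin]
  omega
end

section
/- Let S, U, U', W, W' be finite-dimensional subspaces of a vector space V over a field with U ∩ S = {0}, U' ∩ S = {0}, dim(U ∩ U') ≤ 1, W ≤ U + S, W' ≤ U' + S, and W ∩ W' ∩ S = {0}. If additionally dim((U+S) ∩ (U'+S)) ≤ dim(S) + 1, then dim(W ∩ W') ≤ 1. -/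
open Module

/-- Key dimension-counting step: if `W ≤ U + S`, `W' ≤ U' + S`, `W ∩ W' ∩ S = 0`,
`dim((U+S) ∩ (U'+S)) ≤ dim S + 1`, with `U ∩ S = U' ∩ S = 0` and `dim(U ∩ U') ≤ 1`,
then `dim (W ∩ W') ≤ 1`. -/
theorem dim_inter_codewords_le_one {F V : Type*} [Field F] [AddCommGroup V] [Module F V]
    [FiniteDimensional F V] (S U U' W W' : Submodule F V)
    (hU : U ⊓ S = ⊥) (hU' : U' ⊓ S = ⊥)
    (hUU' : finrank F ↥(U ⊓ U') ≤ 1)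
    (hW : W ≤ U ⊔ S) (hW' : W' ≤ U' ⊔ S)
    (hWW'S : W ⊓ W' ⊓ S = ⊥)
    (hKK' : finrank F ↥((U ⊔ S) ⊓ (U' ⊔ S)) ≤ finrank F S + 1) :
    finrank F ↥(W ⊓ W') ≤ 1 := by
  set T := W ⊓ W' with hT
  have hTK : T ⊔ S ≤ (U ⊔ S) ⊓ (U' ⊔ S) := by
    apply sup_le
    · exact le_inf (le_trans inf_le_left hW) (le_trans inf_le_right hW')
    · exact le_inf le_sup_right le_sup_right
  have h1 : finrank F ↥(T ⊔ S) + finrank F ↥(T ⊓ S) =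
      finrank F ↥T + finrank F ↥S := Submodule.finrank_sup_add_finrank_inf_eq T S
  rw [hWW'S, finrank_bot] at h1
  have h2 : finrank F ↥(T ⊔ S) ≤ finrank F ↥((U ⊔ S) ⊓ (U' ⊔ S)) :=
    Submodule.finrank_mono hTK
  omega
end
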